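/- For every a ∈ ℕ₀, the ℝ-linear span of the set of functions {w_{k,m,2} : k ∈ N₂, ⌊2^{a−1}⌋ ≤ k < 2^a, m ∈ L_{k,2}} equals the ℝ-linear span of {wal_k : ⌊2^{a−1}⌋ ≤ k < 2^a}, as subspaces of the space of real-valued functions on [0,1). -/

import Mathlib

open scoped Classical
open MeasureTheory

open scoped Classical
open MeasureTheory

noncomputable section

/-- The binary digit `ξ_{i+1}` of `x ∈ [0,1)`. -/
def rdigit (x : ℝ) (i : ℕ) : ℕ := (⌊x * 2 ^ (i + 1)⌋).toNat % 2

/-- The `k`-th Walsh function in base `2`. -/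
def walsh (k : ℕ) (x : ℝ) : ℝ :=
  (-1 : ℝ) ^ ∑ i ∈ Finset.range (Nat.size k), (Nat.testBit k i).toNat * rdigit x i

/-- `k` is a sum of two distinct powers of two, i.e. `k ∈ N₂ ∖ N₁`. -/
def twoBit (k : ℕ) : Prop := ∃ a₁ a₂ : ℕ, a₂ < a₁ ∧ k = 2 ^ a₁ + 2 ^ a₂

/-- `k ∈ N₁`, i.e. `k = 0` or `k` is a power of two. -/
def inN1 (k : ℕ) : Prop := k = 0 ∨ ∃ a : ℕ, k = 2 ^ a

/-- `k ∈ N₂`. -/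
def inN2 (k : ℕ) : Prop := inN1 k ∨ twoBit k

/-- For `k = 2^{a₁} + 2^{a₂}` with `a₁ > a₂`, this is the smaller exponent `a₂`. -/
def lowExp (k : ℕ) : ℕ := Nat.log2 (k % 2 ^ Nat.log2 k)

/-- The index set `L_{k,2}`. -/
def L2 (k : ℕ) : Set ℕ := if twoBit k then {m | m < 2 ^ lowExp k} else {0}

/-- The order-2 localized Walsh function `w_{k,m,2}`. -/
def w2 (k m : ℕ) (x : ℝ) : ℝ :=
  if twoBit k then
    Real.sqrt (2 ^ lowExp k) *
      Set.indicator (Set.Ico ((m : ℝ) / 2 ^ lowExp k) (((m : ℝ) + 1) / 2 ^ lowExp k))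
        (fun _ => (1:ℝ)) x *
      walsh k x
  else walsh k x

/-! Write `K = 2^{a₁} + 2^{a₂}` with `a₂ < a₁`. The bits of `K` and of any `l < 2^{a₂}` are
disjoint, so `wal_{K+l} = wal_K · wal_l`; and for `l < 2^c` the function `wal_l` only depends on
the first `c` binary digits, i.e. it is constant on every dyadic interval `I(m, c)`. Conversely the
kernel identity `∑_{l < 2^c} wal_l(x) wal_l(y) = 2^c · [x, y lie in the same I(·, c)]` writes each
indicator `1_{I(m,c)}` as a combination of `wal_0, …, wal_{2^c - 1}`. Hence the functions
`w_{K,m,2}` (`m < 2^{a₂}`) and `wal_{K+l}` (`l < 2^{a₂}`) span the same space, and the blocks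
`{K + l}` together with `{2^{a₁}}` tile `[2^{a₁}, 2^{a₁+1})`. -/

open Finset

lemma rdigit_eq_floor_mod (x : ℝ) (i : ℕ) : rdigit x i = ⌊x * 2 ^ (i + 1)⌋₊ % 2 := by
  rw [rdigit, Int.floor_toNat]

lemma rdigit_lt_two (x : ℝ) (i : ℕ) : rdigit x i < 2 :=
  Nat.mod_lt _ two_pos

lemma floor_mul_two_pow_succ (x : ℝ) (i : ℕ) :
    ⌊x * 2 ^ (i + 1)⌋₊ = 2 * ⌊x * 2 ^ i⌋₊ + rdigit x i := by
  have halve : ⌊x * 2 ^ i⌋₊ = ⌊x * 2 ^ (i + 1)⌋₊ / 2 := by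
    rw [← Nat.floor_div_ofNat, pow_succ, mul_div_assoc, mul_div_cancel_right₀ _ two_ne_zero]
  rw [halve, rdigit_eq_floor_mod, Nat.div_add_mod]

lemma floor_mul_two_pow_eq_iff {x y : ℝ} (hx : x ∈ Set.Ico 0 1) (hy : y ∈ Set.Ico 0 1) (c : ℕ) :
    ⌊x * 2 ^ c⌋₊ = ⌊y * 2 ^ c⌋₊ ↔ ∀ i < c, rdigit x i = rdigit y i := by
  induction c with
  | zero => simp [Nat.floor_eq_zero.mpr hx.2, Nat.floor_eq_zero.mpr hy.2]
  | succ c ih =>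
    rw [floor_mul_two_pow_succ, floor_mul_two_pow_succ, Nat.forall_lt_succ_right, ← ih]
    have := rdigit_lt_two x c
    have := rdigit_lt_two y c
    omega

lemma walsh_eq_neg_one_pow_sum {k n : ℕ} (hk : k < 2 ^ n) (x : ℝ) :
    walsh k x = (-1 : ℝ) ^ ∑ i ∈ range n, (k.testBit i).toNat * rdigit x i := by
  rw [walsh]
  congr 1
  refine sum_subset (range_subset_range.mpr (Nat.size_le.mpr hk)) fun i _ hi => ?_
  rw [Nat.testBit_eq_false_of_lt (Nat.size_le.mp (by simpa using hi)), Bool.toNat_false, zero_mul]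

lemma walsh_eq_prod {k n : ℕ} (hk : k < 2 ^ n) (x : ℝ) :
    walsh k x = ∏ i ∈ range n, ((-1 : ℝ) ^ rdigit x i) ^ (k.testBit i).toNat := by
  simp only [walsh_eq_neg_one_pow_sum hk, ← prod_pow_eq_pow_sum, ← pow_mul, mul_comm]

lemma walsh_add {c k l : ℕ} (hk : 2 ^ c ∣ k) (hl : l < 2 ^ c) (x : ℝ) :
    walsh (k + l) x = walsh k x * walsh l x := by
  obtain ⟨q, rfl⟩ := hk
  set n := Nat.size (2 ^ c * q + l) + c
  have hlt : ∀ {j}, j ≤ 2 ^ c * q + l → j < 2 ^ n := fun hj =>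
    (hj.trans_lt (Nat.lt_size_self _)).trans_le (Nat.pow_le_pow_right two_pos (by omega))
  rw [walsh_eq_prod (hlt le_rfl), walsh_eq_prod (hlt (Nat.le_add_right _ _)),
    walsh_eq_prod (hlt (Nat.le_add_left _ _)), ← prod_mul_distrib]
  refine prod_congr rfl fun i _ => ?_
  rw [Nat.testBit_two_pow_mul_add q hl, Nat.testBit_two_pow_mul]
  by_cases hi : i < c
  · simp [hi, Nat.not_le.mpr hi]
  · simp [hi, Nat.le_of_not_lt hi,
      Nat.testBit_eq_false_of_lt (hl.trans_le (Nat.pow_le_pow_right two_pos (Nat.le_of_not_lt hi)))]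

lemma walsh_eq_of_floor_eq {c l : ℕ} (hl : l < 2 ^ c) {x y : ℝ} (hx : x ∈ Set.Ico 0 1)
    (hy : y ∈ Set.Ico 0 1)
    (h : ⌊x * 2 ^ c⌋₊ = ⌊y * 2 ^ c⌋₊) : walsh l x = walsh l y := by
  rw [walsh_eq_prod hl, walsh_eq_prod hl]
  refine prod_congr rfl fun i hi => ?_
  rw [(floor_mul_two_pow_eq_iff hx hy c).mp h i (mem_range.mp hi)]

lemma sum_range_two_pow_prod_pow_testBit {R : Type*} [CommSemiring R] (s : ℕ → R) (c : ℕ) :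
    ∑ l ∈ range (2 ^ c), ∏ i ∈ range c, s i ^ (l.testBit i).toNat = ∏ i ∈ range c, (1 + s i) := by
  induction c with
  | zero => simp
  | succ c ih =>
    have low : ∀ l ∈ range (2 ^ c),
        ∏ i ∈ range (c + 1), s i ^ (l.testBit i).toNat = ∏ i ∈ range c, s i ^ (l.testBit i).toNat :=
      fun l hl => by
        rw [prod_range_succ, Nat.testBit_eq_false_of_lt (mem_range.mp hl), Bool.toNat_false,
          pow_zero, mul_one]
    have high : ∀ l ∈ range (2 ^ c), ∏ i ∈ range (c + 1), s i ^ ((2 ^ c + l).testBit i).toNat =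
        (∏ i ∈ range c, s i ^ (l.testBit i).toNat) * s c := fun l hl => by
      rw [prod_range_succ, Nat.testBit_two_pow_add_eq,
        Nat.testBit_eq_false_of_lt (mem_range.mp hl)]
      refine congrArg₂ _ (prod_congr rfl fun i hi => ?_) (by simp)
      rw [Nat.testBit_two_pow_add_gt (mem_range.mp hi)]
    rw [pow_succ, mul_two, sum_range_add, sum_congr rfl low, sum_congr rfl high, ← sum_mul, ih,
      prod_range_succ]
    ring

lemma sum_walsh_mul_walsh {x y : ℝ} (hx : x ∈ Set.Ico 0 1) (hy : y ∈ Set.Ico 0 1) (c : ℕ) :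
    ∑ l ∈ range (2 ^ c), walsh l x * walsh l y =
      if ⌊x * 2 ^ c⌋₊ = ⌊y * 2 ^ c⌋₊ then 2 ^ c else 0 := by
  have expand : ∀ l ∈ range (2 ^ c), walsh l x * walsh l y =
      ∏ i ∈ range c, ((-1 : ℝ) ^ (rdigit x i + rdigit y i)) ^ (l.testBit i).toNat :=
    fun l hl => by
      rw [walsh_eq_prod (mem_range.mp hl), walsh_eq_prod (mem_range.mp hl), ← prod_mul_distrib]
      simp only [pow_add, mul_pow]
  rw [sum_congr rfl expand, sum_range_two_pow_prod_pow_testBit]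
  split_ifs with h <;> rw [floor_mul_two_pow_eq_iff hx hy] at h
  · have two : ∀ i ∈ range c, 1 + (-1 : ℝ) ^ (rdigit x i + rdigit y i) = 2 := fun i hi => by
      rw [h i (mem_range.mp hi), ← two_mul, pow_mul]
      norm_num
    rw [prod_congr rfl two, prod_const, card_range]
  · push Not at h
    obtain ⟨i, hi, hne⟩ := h
    refine prod_eq_zero (mem_range.mpr hi) ?_
    have : rdigit x i + rdigit y i = 1 := by
      have := rdigit_lt_two x i
      have := rdigit_lt_two y i
      omega
    norm_num [this]

lemma mem_Ico_div_two_pow_iff {x : ℝ} (hx : 0 ≤ x) (c m : ℕ) :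
    x ∈ Set.Ico ((m : ℝ) / 2 ^ c) ((m + 1) / 2 ^ c) ↔ ⌊x * 2 ^ c⌋₊ = m := by
  rw [Nat.floor_eq_iff (by positivity), Set.mem_Ico, div_le_iff₀ (by positivity),
    lt_div_iff₀ (by positivity)]

lemma div_two_pow_mem_Ico {c m : ℕ} (hm : m < 2 ^ c) : (m : ℝ) / 2 ^ c ∈ Set.Ico 0 1 :=
  ⟨by positivity, (div_lt_one (by positivity)).mpr (by exact_mod_cast hm)⟩

lemma floor_div_two_pow_mul_two_pow (c m : ℕ) : ⌊(m : ℝ) / 2 ^ c * 2 ^ c⌋₊ = m := by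
  rw [div_mul_cancel₀ _ (by positivity), Nat.floor_natCast]

lemma floor_mul_two_pow_lt {x : ℝ} (hx : x ∈ Set.Ico 0 1) (c : ℕ) : ⌊x * 2 ^ c⌋₊ < 2 ^ c := by
  rw [Nat.floor_lt (mul_nonneg hx.1 (by positivity))]
  push_cast
  exact mul_lt_of_lt_one_left (by positivity) hx.2

lemma indicator_Ico_div_two_pow_eq_sum_walsh {x : ℝ} (hx : x ∈ Set.Ico 0 1) {c m : ℕ}
    (hm : m < 2 ^ c) :
    Set.indicator (Set.Ico ((m : ℝ) / 2 ^ c) ((m + 1) / 2 ^ c)) (fun _ => (1 : ℝ)) x =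
      (2 ^ c)⁻¹ * ∑ l ∈ range (2 ^ c), walsh l (m / 2 ^ c) * walsh l x := by
  rw [sum_walsh_mul_walsh (div_two_pow_mem_Ico hm) hx, floor_div_two_pow_mul_two_pow]
  by_cases h : m = ⌊x * 2 ^ c⌋₊
  · rw [if_pos h, Set.indicator_of_mem ((mem_Ico_div_two_pow_iff hx.1 c m).mpr h.symm),
      inv_mul_cancel₀ (by positivity)]
  · rw [if_neg h, mul_zero, Set.indicator_of_notMem
      fun hmem => h ((mem_Ico_div_two_pow_iff hx.1 c m).mp hmem).symm]

lemma walsh_eq_sum_indicator_Ico_div_two_pow {x : ℝ} (hx : x ∈ Set.Ico 0 1) {c l : ℕ}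
    (hl : l < 2 ^ c) :
    walsh l x = ∑ m ∈ range (2 ^ c), walsh l (m / 2 ^ c) *
      Set.indicator (Set.Ico ((m : ℝ) / 2 ^ c) ((m + 1) / 2 ^ c)) (fun _ => (1 : ℝ)) x := by
  have hfloor := floor_mul_two_pow_lt hx c
  rw [sum_eq_single_of_mem _ (mem_range.mpr hfloor)]
  · rw [Set.indicator_of_mem ((mem_Ico_div_two_pow_iff hx.1 _ _).mpr rfl), mul_one]
    exact walsh_eq_of_floor_eq hl hx (div_two_pow_mem_Ico hfloor)
      (floor_div_two_pow_mul_two_pow _ _).symm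
  · intro m _ hm
    rw [Set.indicator_of_notMem fun h => hm ((mem_Ico_div_two_pow_iff hx.1 _ _).mp h).symm,
      mul_zero]

lemma log_two_pow_add_two_pow_add {a₁ a₂ l : ℕ} (h : a₂ < a₁) (hl : l < 2 ^ a₂) :
    Nat.log 2 (2 ^ a₁ + 2 ^ a₂ + l) = a₁ := by
  have : 2 ^ a₂ * 2 ≤ 2 ^ a₁ := by
    rw [← pow_succ]
    exact Nat.pow_le_pow_right two_pos h
  refine Nat.log_eq_of_pow_le_of_lt_pow (by omega) ?_
  rw [pow_succ]
  omega

lemma half_two_pow_le_and_lt_two_pow_iff {a k : ℕ} (hk : k ≠ 0) :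
    2 ^ a / 2 ≤ k ∧ k < 2 ^ a ↔ Nat.log 2 k + 1 = a := by
  cases a with
  | zero => omega
  | succ b =>
    rw [pow_succ, Nat.mul_div_cancel _ two_pos, ← pow_succ, Nat.add_right_cancel_iff,
      Nat.log_eq_iff (Or.inr ⟨one_lt_two, hk⟩)]

lemma two_pow_add_two_pow_add_mem_range_iff {a a₁ a₂ l : ℕ} (h : a₂ < a₁) (hl : l < 2 ^ a₂) :
    2 ^ a / 2 ≤ 2 ^ a₁ + 2 ^ a₂ + l ∧ 2 ^ a₁ + 2 ^ a₂ + l < 2 ^ a ↔ a₁ + 1 = a := by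
  rw [half_two_pow_le_and_lt_two_pow_iff (by positivity), log_two_pow_add_two_pow_add h hl]

lemma lowExp_two_pow_add_two_pow {a₁ a₂ : ℕ} (h : a₂ < a₁) : lowExp (2 ^ a₁ + 2 ^ a₂) = a₂ := by
  have hlog := log_two_pow_add_two_pow_add h (Nat.two_pow_pos a₂)
  rw [add_zero] at hlog
  simp only [lowExp, Nat.log2_eq_log_two]
  rw [hlog, Nat.add_mod_left, Nat.mod_eq_of_lt (Nat.pow_lt_pow_right one_lt_two h),
    Nat.log_pow one_lt_two]

lemma not_twoBit_of_inN1 {k : ℕ} (hk : inN1 k) : ¬ twoBit k := by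
  rintro ⟨a₁, a₂, h, rfl⟩
  have hlog := log_two_pow_add_two_pow_add h (Nat.two_pow_pos a₂)
  rw [add_zero] at hlog
  rcases hk with hk | ⟨e, he⟩
  · exact absurd hk (by positivity)
  · rw [he, Nat.log_pow one_lt_two] at hlog
    subst hlog
    exact (Nat.two_pow_pos a₂).ne' (by omega)

lemma exists_eq_two_pow_add_two_pow_add {j : ℕ} (hj : ¬ inN1 j) :
    ∃ a₁ a₂ l, a₂ < a₁ ∧ l < 2 ^ a₂ ∧ j = 2 ^ a₁ + 2 ^ a₂ + l := by
  have hlow := Nat.pow_log_le_self 2 fun h => hj (Or.inl h)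
  have hhigh := Nat.lt_pow_succ_log_self one_lt_two j
  generalize Nat.log 2 j = a₁ at hlow hhigh
  have hr : j - 2 ^ a₁ ≠ 0 := fun h => hj (Or.inr ⟨a₁, by omega⟩)
  have hrlow := Nat.pow_log_le_self 2 hr
  have hrhigh := Nat.lt_pow_succ_log_self one_lt_two (j - 2 ^ a₁)
  generalize Nat.log 2 (j - 2 ^ a₁) = a₂ at hrlow hrhigh
  rw [pow_succ] at hhigh hrhigh
  have h : a₂ < a₁ := (Nat.pow_lt_pow_iff_right one_lt_two).mp (by omega)
  exact ⟨a₁, a₂, j - 2 ^ a₁ - 2 ^ a₂, h, by omega, by omega⟩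

lemma w2_of_not_twoBit {k : ℕ} (hk : ¬ twoBit k) (m : ℕ) : w2 k m = walsh k := by
  funext x
  rw [w2, if_neg hk]

lemma w2_two_pow_add_two_pow {a₁ a₂ : ℕ} (h : a₂ < a₁) (m : ℕ) (x : ℝ) :
    w2 (2 ^ a₁ + 2 ^ a₂) m x = √(2 ^ a₂) *
      Set.indicator (Set.Ico ((m : ℝ) / 2 ^ a₂) ((m + 1) / 2 ^ a₂)) (fun _ => (1 : ℝ)) x *
        walsh (2 ^ a₁ + 2 ^ a₂) x := by
  rw [w2, if_pos ⟨a₁, a₂, h, rfl⟩, lowExp_two_pow_add_two_pow h]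

lemma mem_L2_two_pow_add_two_pow {a₁ a₂ m : ℕ} (h : a₂ < a₁) :
    m ∈ L2 (2 ^ a₁ + 2 ^ a₂) ↔ m < 2 ^ a₂ := by
  rw [L2, if_pos ⟨a₁, a₂, h, rfl⟩, lowExp_two_pow_add_two_pow h, Set.mem_ofPred_eq]

lemma walsh_two_pow_add_two_pow_add {a₁ a₂ l : ℕ} (h : a₂ < a₁) (hl : l < 2 ^ a₂) (x : ℝ) :
    walsh (2 ^ a₁ + 2 ^ a₂ + l) x = walsh (2 ^ a₁ + 2 ^ a₂) x * walsh l x :=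
  walsh_add (dvd_add (pow_dvd_pow 2 h.le) dvd_rfl) hl x

lemma domRestrict_mem_span_of_eq_sum {α ι R : Type*} [CommSemiring R] {A : Set α}
    {S : Set (A → R)} {f : α → R} (s : Finset ι) (w : ι → R) (g : ι → α → R)
    (hf : ∀ x ∈ A, f x = ∑ i ∈ s, w i * g i x) (hg : ∀ i ∈ s, A.domRestrict (g i) ∈ S) :
    A.domRestrict f ∈ Submodule.span R S := by
  have hsum : A.domRestrict f = ∑ i ∈ s, w i • A.domRestrict (g i) := by
    funext ⟨x, hx⟩
    simp only [Set.domRestrict_apply, hf x hx, Finset.sum_apply, Pi.smul_apply, smul_eq_mul]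
  rw [hsum]
  exact Submodule.sum_mem _ fun i hi => Submodule.smul_mem _ _ (Submodule.subset_span (hg i hi))

lemma domRestrict_w2_mem_span_walsh {a k m : ℕ} (hk₁ : 2 ^ a / 2 ≤ k) (hk₂ : k < 2 ^ a)
    (hm : m ∈ L2 k) :
    (Set.Ico (0:ℝ) 1).domRestrict (w2 k m) ∈ Submodule.span ℝ
      {g | ∃ k : ℕ, 2 ^ a / 2 ≤ k ∧ k < 2 ^ a ∧ g = (Set.Ico (0:ℝ) 1).domRestrict (walsh k)} := by
  by_cases hk : twoBit k
  swap
  · exact Submodule.subset_span ⟨k, hk₁, hk₂, by rw [w2_of_not_twoBit hk]⟩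
  obtain ⟨a₁, a₂, h, rfl⟩ := hk
  rw [mem_L2_two_pow_add_two_pow h] at hm
  have ha : a₁ + 1 = a :=
    (two_pow_add_two_pow_add_mem_range_iff h (Nat.two_pow_pos a₂)).mp ⟨hk₁, hk₂⟩
  refine domRestrict_mem_span_of_eq_sum (range (2 ^ a₂))
    (fun l => √(2 ^ a₂) * (2 ^ a₂)⁻¹ * walsh l (m / 2 ^ a₂))
    (fun l => walsh (2 ^ a₁ + 2 ^ a₂ + l)) (fun x hx => ?_) fun l hl => ?_
  · rw [w2_two_pow_add_two_pow h, indicator_Ico_div_two_pow_eq_sum_walsh hx hm]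
    simp only [mul_sum, sum_mul]
    refine sum_congr rfl fun l hl => ?_
    rw [walsh_two_pow_add_two_pow_add h (mem_range.mp hl)]
    ring
  · have hrange := (two_pow_add_two_pow_add_mem_range_iff h (mem_range.mp hl)).mpr ha
    exact ⟨_, hrange.1, hrange.2, rfl⟩

lemma domRestrict_walsh_mem_span_w2 {a j : ℕ} (hj₁ : 2 ^ a / 2 ≤ j) (hj₂ : j < 2 ^ a) :
    (Set.Ico (0:ℝ) 1).domRestrict (walsh j) ∈ Submodule.span ℝ
      {g | ∃ k m : ℕ, inN2 k ∧ 2 ^ a / 2 ≤ k ∧ k < 2 ^ a ∧ m ∈ L2 k ∧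
        g = (Set.Ico (0:ℝ) 1).domRestrict (w2 k m)} := by
  by_cases hj : inN1 j
  · have hj' := not_twoBit_of_inN1 hj
    exact Submodule.subset_span ⟨j, 0, Or.inl hj, hj₁, hj₂, by rw [L2, if_neg hj']; rfl,
      by rw [w2_of_not_twoBit hj']⟩
  obtain ⟨a₁, a₂, l, h, hl, rfl⟩ := exists_eq_two_pow_add_two_pow_add hj
  have hK := (two_pow_add_two_pow_add_mem_range_iff h (Nat.two_pow_pos a₂)).mpr
    ((two_pow_add_two_pow_add_mem_range_iff h hl).mp ⟨hj₁, hj₂⟩)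
  rw [add_zero] at hK
  refine domRestrict_mem_span_of_eq_sum (range (2 ^ a₂)) (fun m => walsh l (m / 2 ^ a₂) / √(2 ^ a₂))
    (fun m => w2 (2 ^ a₁ + 2 ^ a₂) m) (fun x hx => ?_) fun m hm =>
      ⟨_, m, Or.inr ⟨a₁, a₂, h, rfl⟩, hK.1, hK.2,
        (mem_L2_two_pow_add_two_pow h).mpr (mem_range.mp hm), rfl⟩
  rw [walsh_two_pow_add_two_pow_add h hl, walsh_eq_sum_indicator_Ico_div_two_pow hx hl, mul_sum]
  refine sum_congr rfl fun m _ => ?_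
  rw [w2_two_pow_add_two_pow h]
  field_simp

theorem stmt3 (a : ℕ) :
    Submodule.span ℝ
        {g : ↥(Set.Ico (0:ℝ) 1) → ℝ |
          ∃ k m : ℕ, inN2 k ∧ 2 ^ a / 2 ≤ k ∧ k < 2 ^ a ∧ m ∈ L2 k ∧
            g = (Set.Ico (0:ℝ) 1).restrict (w2 k m)}
      = Submodule.span ℝ
          {g : ↥(Set.Ico (0:ℝ) 1) → ℝ |
            ∃ k : ℕ, 2 ^ a / 2 ≤ k ∧ k < 2 ^ a ∧
              g = (Set.Ico (0:ℝ) 1).restrict (walsh k)} := by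
  apply le_antisymm <;> rw [Submodule.span_le]
  · rintro _ ⟨k, m, -, hk₁, hk₂, hm, rfl⟩
    exact domRestrict_w2_mem_span_walsh hk₁ hk₂ hm
  · rintro _ ⟨j, hj₁, hj₂, rfl⟩
    exact domRestrict_walsh_mem_span_w2 hj₁ hj₂

end
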